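/- Let (p_j)_{j≥1} be a pmf with finite first moment, r an α-sequence, and define the exploded degree distribution by p̃_1 = β_r^{-1}(E[D r_D] + p_1(1−r_1)) and p̃_i = β_r^{-1} p_i(1−r_i) for i ≥ 2, where β_r = E[D r_D] + 1 − α. Then (p̃_i)_{i≥1} is a probability mass function, and its size-biased criticality condition satisfies: E[D̃(D̃−2)] > 0 if and only if E[D(D−1)(1−r_D)] > E[D], where D̃ has pmf (p̃_i). -/

import Mathlib

/-!
Write `A = E[D r_D]`; then `p̃ = (p (1 - r) + A δ₁) / β`. Since `D ≥ 1` we have `A ≥ α`, so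
`β ≥ 1 > 0`, and `p̃` has total mass `(1 - α + A) / β = 1`. In the criticality functional the
extra atom at `1` contributes `1 · (1 - 2) · A = -A`, so
`β E[D̃(D̃-2)] = E[D(D-2)(1-r_D)] - E[D r_D]`, which equals `E[D(D-1)(1-r_D)] - E[D]` termwise.
-/

lemma Summable.of_tsum_ne_zero {ι : Type*} {f : ι → ℝ} (h : ∑' i, f i ≠ 0) : Summable f := by
  by_contra hf
  exact h (tsum_eq_zero_of_not_summable hf)

lemma Summable.mul_of_abs_le_one {ι : Type*} {f g : ι → ℝ} (hf : Summable f)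
    (hf0 : ∀ i, 0 ≤ f i) (hg : ∀ i, |g i| ≤ 1) : Summable fun i => f i * g i :=
  hf.of_norm_bounded fun i => by
    rw [Real.norm_eq_abs, abs_mul, abs_of_nonneg (hf0 i)]
    exact mul_le_of_le_one_right (hf0 i) (hg i)

lemma abs_le_one_of_mem_Icc {x : ℝ} (hx : x ∈ Set.Icc (0 : ℝ) 1) : |x| ≤ 1 :=
  abs_le.mpr ⟨by linarith [hx.1], hx.2⟩

lemma abs_one_sub_le_one_of_mem_Icc {x : ℝ} (hx : x ∈ Set.Icc (0 : ℝ) 1) : |1 - x| ≤ 1 :=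
  abs_le_one_of_mem_Icc (Set.Icc.mem_iff_one_sub_mem.mp hx)

lemma tsum_le_tsum_natCast_mul {g : ℕ → ℝ} (hg : ∀ j, 0 ≤ g j) (hg0 : g 0 = 0)
    (h : Summable fun j : ℕ => (j : ℝ) * g j) : ∑' j, g j ≤ ∑' j : ℕ, (j : ℝ) * g j := by
  have hle : ∀ j : ℕ, g j ≤ j * g j := fun j => by
    rcases Nat.eq_zero_or_pos j with rfl | hj
    · simp [hg0]
    · exact le_mul_of_one_le_left (hg j) (by exact_mod_cast hj)
  exact (h.of_nonneg_of_le hg hle).tsum_le_tsum hle h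

lemma tsum_mul_add_ite_div {f w : ℕ → ℝ} (hfw : Summable fun i => f i * w i) (c β : ℝ) :
    ∑' i, f i * ((w i + if i = 1 then c else 0) / β) = (∑' i, f i * w i + f 1 * c) / β := by
  have hsingle : Summable fun i : ℕ => f i * if i = 1 then c else 0 :=
    summable_of_ne_finset_zero (s := {1}) fun i hi => by simp [Finset.mem_singleton.not.mp hi]
  simp only [mul_div_assoc', mul_add]
  rw [tsum_div_const, hfw.tsum_add hsingle]
  simp only [mul_ite, mul_zero, tsum_ite_eq]

section Exploded

variable {p r : ℕ → ℝ}

lemma tsum_mul_one_sub (hp : ∀ j, 0 ≤ p j) (hp_sum : Summable p)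
    (hr : ∀ j, r j ∈ Set.Icc (0 : ℝ) 1) :
    ∑' j, p j * (1 - r j) = ∑' j, p j - ∑' j, p j * r j := by
  simp only [mul_sub, mul_one]
  exact hp_sum.tsum_sub (hp_sum.mul_of_abs_le_one hp fun j => abs_le_one_of_mem_Icc (hr j))

lemma tsum_mul_le_tsum_natCast_mul_mul (hp : ∀ j, 0 ≤ p j) (hp0 : p 0 = 0)
    (hμ : Summable fun j : ℕ => (j : ℝ) * p j) (hr : ∀ j, r j ∈ Set.Icc (0 : ℝ) 1) :
    ∑' j, p j * r j ≤ ∑' j : ℕ, (j : ℝ) * p j * r j := by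
  have hA : Summable fun j : ℕ => (j : ℝ) * (p j * r j) :=
    (hμ.mul_of_abs_le_one (fun j => mul_nonneg j.cast_nonneg (hp j))
      fun j => abs_le_one_of_mem_Icc (hr j)).congr fun j => by ring
  calc ∑' j, p j * r j ≤ ∑' j : ℕ, (j : ℝ) * (p j * r j) :=
        tsum_le_tsum_natCast_mul (fun j => mul_nonneg (hp j) (hr j).1) (by simp [hp0]) hA
    _ = ∑' j : ℕ, (j : ℝ) * p j * r j := tsum_congr fun j => by ring

lemma summable_natCast_mul_sub_mul_mul (hp : ∀ j, 0 ≤ p j)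
    (hμ : Summable fun j : ℕ => (j : ℝ) * p j) (hμ2 : Summable fun j : ℕ => (j : ℝ) ^ 2 * p j)
    {g : ℕ → ℝ} (hg : ∀ j, |g j| ≤ 1) (a : ℝ) :
    Summable fun j : ℕ => (j : ℝ) * (j - a) * (p j * g j) := by
  have h2 := hμ2.mul_of_abs_le_one (fun j => mul_nonneg (by positivity) (hp j)) hg
  have h1 := hμ.mul_of_abs_le_one (fun j => mul_nonneg j.cast_nonneg (hp j)) hg
  exact (h2.sub (h1.mul_left a)).congr fun j => by ring

lemma tsum_criticality_eq (hp : ∀ j, 0 ≤ p j)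
    (hμ : Summable fun j : ℕ => (j : ℝ) * p j) (hμ2 : Summable fun j : ℕ => (j : ℝ) ^ 2 * p j)
    (hr : ∀ j, r j ∈ Set.Icc (0 : ℝ) 1) :
    ∑' j : ℕ, (j : ℝ) * (j - 2) * (p j * (1 - r j)) - ∑' j : ℕ, (j : ℝ) * p j * r j =
      ∑' j : ℕ, (j : ℝ) * (j - 1) * (1 - r j) * p j - ∑' j : ℕ, (j : ℝ) * p j := by
  have hr' j := abs_one_sub_le_one_of_mem_Icc (hr j)
  have hA : Summable fun j : ℕ => (j : ℝ) * p j * r j :=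
    hμ.mul_of_abs_le_one (fun j => mul_nonneg j.cast_nonneg (hp j))
      fun j => abs_le_one_of_mem_Icc (hr j)
  have hS : Summable fun j : ℕ => (j : ℝ) * (j - 1) * (1 - r j) * p j :=
    (summable_natCast_mul_sub_mul_mul hp hμ hμ2 hr' 1).congr fun j => by ring
  rw [← (summable_natCast_mul_sub_mul_mul hp hμ hμ2 hr' 2).tsum_sub hA, ← hS.tsum_sub hμ]
  exact tsum_congr fun j => by ring

end Exploded

/-- The exploded degree distribution is a pmf, and `E[D̃(D̃-2)] > 0` iff
`E[D(D-1)(1-r_D)] > E[D]`. -/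
theorem stmt_9 (p : ℕ → ℝ) (r : ℕ → ℝ) (α : ℝ)
    (hp : ∀ j, 0 ≤ p j) (hp0 : p 0 = 0) (hpsum : ∑' j, p j = 1)
    (hμ : Summable fun j : ℕ => (j : ℝ) * p j)
    (hμ2 : Summable fun j : ℕ => (j : ℝ) ^ 2 * p j)
    (hr : ∀ j, r j ∈ Set.Icc (0 : ℝ) 1)
    (hα : ∑' j, p j * r j = α)
    (β : ℝ) (hβ : β = (∑' j : ℕ, (j : ℝ) * p j * r j) + 1 - α)
    (ptilde : ℕ → ℝ)
    (hpt : ∀ i, ptilde i =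
      if i = 1 then ((∑' j : ℕ, (j : ℝ) * p j * r j) + p 1 * (1 - r 1)) / β
      else p i * (1 - r i) / β) :
    (∀ i, 0 ≤ ptilde i) ∧ (∑' i, ptilde i) = 1 ∧
    ((∑' i : ℕ, (i : ℝ) * ((i : ℝ) - 2) * ptilde i) > 0 ↔
      (∑' j : ℕ, (j : ℝ) * ((j : ℝ) - 1) * (1 - r j) * p j) > ∑' j : ℕ, (j : ℝ) * p j) := by
  set A := ∑' j : ℕ, (j : ℝ) * p j * r j
  have hr' j := abs_one_sub_le_one_of_mem_Icc (hr j)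
  have hp_sum : Summable p := .of_tsum_ne_zero (by simp [hpsum])
  have hβ_pos : 0 < β := by linarith [hα ▸ tsum_mul_le_tsum_natCast_mul_mul hp hp0 hμ hr]
  have hpt' : ptilde = fun i => (p i * (1 - r i) + if i = 1 then A else 0) / β := by
    funext i
    rw [hpt]
    split_ifs <;> simp_all [add_comm]
  refine ⟨fun i => ?_, ?_, ?_⟩
  · have hA_nonneg : 0 ≤ A :=
      tsum_nonneg fun j => mul_nonneg (mul_nonneg j.cast_nonneg (hp j)) (hr j).1
    have hmass_nonneg := mul_nonneg (hp i) (sub_nonneg.mpr (hr i).2)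
    simp only [hpt']
    split_ifs <;> positivity
  · have hmass := tsum_mul_add_ite_div (f := fun _ => 1)
      (by simpa using hp_sum.mul_of_abs_le_one hp hr') A β
    simp only [one_mul] at hmass
    rw [hpt', hmass, tsum_mul_one_sub hp hp_sum hr, hpsum, hα, div_eq_one_iff_eq hβ_pos.ne']
    linarith
  · have hcrit := tsum_criticality_eq hp hμ hμ2 hr
    rw [hpt', tsum_mul_add_ite_div (summable_natCast_mul_sub_mul_mul hp hμ hμ2 hr' 2),
      gt_iff_lt, div_pos_iff_of_pos_right hβ_pos]
    push_cast
    constructor <;> intro h <;> linarith
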